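/- Let 0 → N → N ⊕ ℤ → ℤ → 0 be the canonical split exact sequence of lattices, s : N ⊕ ℤ → N the projection and φ : N ⊕ ℤ → ℤ the second projection. For a polyhedral cone σ ⊆ (N ⊕ ℤ) ⊗ ℚ, the set s(σ ∩ φ^{-1}(1)) is a polyhedron in N ⊗ ℚ (possibly empty) whose recession cone is s(σ ∩ φ^{-1}(0)) = σ ∩ (N ⊗ ℚ), provided σ ∩ φ^{-1}(1) ≠ ∅. -/

import Mathlib

/-!
The cone `σ` is polyhedral (Weyl's theorem: eliminate the generators one at a time by
Fourier–Motzkin). Since `σ` is its own recession cone, and the recession cone of a nonempty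
polyhedron `{x | ∀ j, b j ≤ f j x}` is `{v | ∀ j, 0 ≤ f j v}`, the cone is even cut out by
homogeneous inequalities `0 ≤ f j`. The slice `s(σ ∩ φ⁻¹(r))` is the preimage of `σ` under the
affine map `x ↦ (x, r)`, hence the polyhedron `{x | ∀ j, -f j (0, r) ≤ f j (x, 0)}`. Its
recession cone is `{v | ∀ j, 0 ≤ f j (v, 0)}`, which is the slice at height `0`.
-/

theorem Finite.exists_between_of_forall_le {α ι κ : Type*} [LinearOrder α] [Nonempty α]
    [Finite ι] [Finite κ] (l : ι → α) (u : κ → α) (h : ∀ i j, l i ≤ u j) :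
    ∃ t, (∀ i, l i ≤ t) ∧ ∀ j, t ≤ u j := by
  rcases isEmpty_or_nonempty ι with hι | hι
  · obtain ⟨t, ht⟩ := (Set.toFinite (Set.range u)).bddBelow
    exact ⟨t, hι.elim, fun j => ht ⟨j, rfl⟩⟩
  · obtain ⟨i₀, hi₀⟩ := Finite.exists_max l
    exact ⟨l i₀, hi₀, h i₀⟩

section Polyhedra

variable {𝕜 E : Type*} [Field 𝕜] [LinearOrder 𝕜] [AddCommGroup E] [Module 𝕜 E]

variable (𝕜) in
def IsPolyhedral (S : Set E) : Prop :=
  ∃ (κ : Type) (_ : Finite κ) (f : κ → Module.Dual 𝕜 E) (b : κ → 𝕜),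
    S = {x | ∀ j, b j ≤ f j x}

variable (𝕜) in
def recessionCone (S : Set E) : Set E :=
  {v | ∀ x ∈ S, ∀ t : 𝕜, 0 ≤ t → x + t • v ∈ S}

variable (𝕜) in
def nonnegSpan {m : ℕ} (w : Fin m → E) : Set E :=
  {x | ∃ c : Fin m → 𝕜, (∀ i, 0 ≤ c i) ∧ x = ∑ i, c i • w i}

theorem isPolyhedral_setOf_le {κ : Type} [Finite κ] (f : κ → Module.Dual 𝕜 E) (b : κ → 𝕜) :
    IsPolyhedral 𝕜 {x | ∀ j, b j ≤ f j x} :=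
  ⟨κ, inferInstance, f, b, rfl⟩

theorem IsPolyhedral.exists_matrix {ι : Type*} [Fintype ι] {S : Set (ι → 𝕜)}
    (hS : IsPolyhedral 𝕜 S) :
    ∃ (k : ℕ) (A : Matrix (Fin k) ι 𝕜) (b : Fin k → 𝕜), S = {x | ∀ j, b j ≤ A.mulVec x j} := by
  classical
  obtain ⟨κ, _, f, b, rfl⟩ := hS
  obtain ⟨k, ⟨e⟩⟩ := Finite.exists_equiv_fin κ
  refine ⟨k, LinearMap.toMatrix' (LinearMap.pi fun j => f (e.symm j)), b ∘ e.symm, ?_⟩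
  ext x
  simp only [Set.mem_ofPred_eq, LinearMap.toMatrix'_mulVec, LinearMap.pi_apply,
    Function.comp_apply, e.symm.forall_congr_left, Equiv.symm_symm, Equiv.symm_apply_apply]

theorem zero_mem_nonnegSpan {m : ℕ} (w : Fin m → E) : (0 : E) ∈ nonnegSpan 𝕜 w :=
  ⟨0, fun _ => le_rfl, by simp⟩

theorem mem_nonnegSpan_succ {m : ℕ} (w : Fin (m + 1) → E) {x : E} :
    x ∈ nonnegSpan 𝕜 w ↔
      ∃ t : 𝕜, 0 ≤ t ∧ x - t • w (Fin.last m) ∈ nonnegSpan 𝕜 (fun i => w i.castSucc) := by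
  constructor
  · rintro ⟨c, hc, rfl⟩
    refine ⟨c (Fin.last m), hc _, fun i => c i.castSucc, fun i => hc _, ?_⟩
    rw [Fin.sum_univ_castSucc, add_sub_cancel_right]
  · rintro ⟨t, ht, c, hc, hx⟩
    refine ⟨Fin.snoc c t, fun i => Fin.lastCases (by simpa) (fun i => by simpa using hc i) i, ?_⟩
    rw [Fin.sum_univ_castSucc, ← sub_eq_iff_eq_add]
    simpa using hx

variable [IsStrictOrderedRing 𝕜]

theorem add_smul_mem_nonnegSpan {m : ℕ} {w : Fin m → E} {x y : E} (hx : x ∈ nonnegSpan 𝕜 w)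
    (hy : y ∈ nonnegSpan 𝕜 w) {t : 𝕜} (ht : 0 ≤ t) : x + t • y ∈ nonnegSpan 𝕜 w := by
  obtain ⟨c, hc, rfl⟩ := hx
  obtain ⟨d, hd, rfl⟩ := hy
  refine ⟨c + t • d, fun i => add_nonneg (hc i) (mul_nonneg ht (hd i)), ?_⟩
  simp [Finset.smul_sum, add_smul, smul_smul, Finset.sum_add_distrib]

theorem preimage_add_const_setOf_le {E' κ : Type*} [AddCommGroup E'] [Module 𝕜 E']
    (L : E' →ₗ[𝕜] E) (c : E) (f : κ → Module.Dual 𝕜 E) (b : κ → 𝕜) :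
    (fun x => L x + c) ⁻¹' {y | ∀ j, b j ≤ f j y} = {x | ∀ j, b j - f j c ≤ (f j ∘ₗ L) x} := by
  ext x
  simp

theorem exists_le_add_mul_iff {κ : Type*} [Finite κ] (L a b : κ → 𝕜) :
    (∃ t, ∀ j, b j ≤ L j + a j * t) ↔
      (∀ j, a j = 0 → b j ≤ L j) ∧
        ∀ p q, 0 < a p → a q < 0 → a p * b q - a q * b p ≤ a p * L q - a q * L p := by
  constructor
  · rintro ⟨t, ht⟩
    refine ⟨fun j hj => by simpa [hj] using ht j, fun p q hp hq => ?_⟩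
    nlinarith [ht p, ht q]
  · rintro ⟨hzero, hpair⟩
    obtain ⟨t, hlow, hup⟩ := Finite.exists_between_of_forall_le
      (fun p : {p // 0 < a p} => (b p - L p) / a p) (fun q : {q // a q < 0} => (b q - L q) / a q)
      fun ⟨p, hp⟩ ⟨q, hq⟩ => by
        rw [le_div_iff_of_neg hq, div_mul_eq_mul_div, le_div_iff₀ hp]
        linarith [hpair p q hp hq]
    refine ⟨t, fun j => ?_⟩
    rcases lt_trichotomy (a j) 0 with hj | hj | hj
    · have := hup ⟨j, hj⟩
      rw [le_div_iff_of_neg hj] at this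
      linarith
    · simpa [hj] using hzero j hj
    · have := hlow ⟨j, hj⟩
      rw [div_le_iff₀ hj] at this
      linarith

theorem isPolyhedral_exists_le_add_mul {κ : Type} [Finite κ] (f : κ → Module.Dual 𝕜 E)
    (a b : κ → 𝕜) : IsPolyhedral 𝕜 {x | ∃ t, ∀ j, b j ≤ f j x + a j * t} := by
  refine ⟨{j // a j = 0} ⊕ {pq : κ × κ // 0 < a pq.1 ∧ a pq.2 < 0}, inferInstance,
    Sum.elim (fun j => f j) (fun pq => a pq.1.1 • f pq.1.2 - a pq.1.2 • f pq.1.1),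
    Sum.elim (fun j => b j) (fun pq => a pq.1.1 * b pq.1.2 - a pq.1.2 * b pq.1.1), ?_⟩
  ext x
  simp [exists_le_add_mul_iff, Sum.forall, Subtype.forall, Prod.forall, and_imp]

theorem isPolyhedral_singleton_zero [FiniteDimensional 𝕜 E] : IsPolyhedral 𝕜 ({0} : Set E) := by
  let v := Module.finBasis 𝕜 E
  refine ⟨_ ⊕ _, inferInstance, Sum.elim v.coord (fun i => -v.coord i), 0, ?_⟩
  ext x
  simp [Sum.forall, ← v.forall_coord_eq_zero_iff, le_antisymm_iff, forall_and, and_comm]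

theorem isPolyhedral_nonnegSpan [FiniteDimensional 𝕜 E] :
    ∀ {m : ℕ} (w : Fin m → E), IsPolyhedral 𝕜 (nonnegSpan 𝕜 w)
  | 0, w => by
    convert isPolyhedral_singleton_zero (𝕜 := 𝕜) (E := E)
    ext x
    simp [nonnegSpan]
  | m + 1, w => by
    obtain ⟨κ, _, f, b, hS⟩ := isPolyhedral_nonnegSpan (fun i => w i.castSucc)
    convert isPolyhedral_exists_le_add_mul (Option.elim · 0 f)
      (Option.elim · 1 fun j => -f j (w (Fin.last m))) (Option.elim · 0 b) using 1
    ext x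
    rw [Set.mem_ofPred_eq, mem_nonnegSpan_succ, hS]
    refine exists_congr fun t => ?_
    simp [Option.forall, sub_eq_add_neg, mul_comm]

theorem nonneg_of_forall_le_add_mul {a b c : 𝕜} (h : ∀ t, 0 ≤ t → b ≤ a + t * c) : 0 ≤ c := by
  by_contra! hc
  have key := h ((a - b + 1) / -c) (div_nonneg (by linarith [h 0 le_rfl]) (by linarith))
  have hcancel : (a - b + 1) / -c * c = -(a - b + 1) := by
    rw [div_mul_eq_mul_div, mul_div_assoc, div_neg, div_self hc.ne, mul_neg, mul_one]
  linarith

theorem recessionCone_setOf_le {κ : Type*} (f : κ → Module.Dual 𝕜 E) (b : κ → 𝕜)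
    (hne : {x | ∀ j, b j ≤ f j x}.Nonempty) :
    recessionCone 𝕜 {x | ∀ j, b j ≤ f j x} = {v | ∀ j, 0 ≤ f j v} := by
  obtain ⟨x₀, hx₀⟩ := hne
  ext v
  refine ⟨fun hv j => nonneg_of_forall_le_add_mul (a := f j x₀) (b := b j) fun t ht => ?_,
    fun hv x hx t ht j => ?_⟩
  · simpa using hv x₀ hx₀ t ht j
  · simpa using add_le_add (hx j) (mul_nonneg ht (hv j))

theorem recessionCone_eq_self {S : Set E} (h0 : (0 : E) ∈ S)
    (hS : ∀ x ∈ S, ∀ y ∈ S, ∀ t : 𝕜, 0 ≤ t → x + t • y ∈ S) : recessionCone 𝕜 S = S :=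
  Set.Subset.antisymm (fun v hv => by simpa using hv 0 h0 1 zero_le_one)
    fun v hv x hx t ht => hS x hx v hv t ht

theorem IsPolyhedral.exists_eq_setOf_nonneg {S : Set E} (hP : IsPolyhedral 𝕜 S) (h0 : (0 : E) ∈ S)
    (hS : ∀ x ∈ S, ∀ y ∈ S, ∀ t : 𝕜, 0 ≤ t → x + t • y ∈ S) :
    ∃ (κ : Type) (_ : Finite κ) (f : κ → Module.Dual 𝕜 E), S = {x | ∀ j, 0 ≤ f j x} := by
  obtain ⟨κ, _, f, b, rfl⟩ := hP
  refine ⟨κ, inferInstance, f, ?_⟩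
  rw [← recessionCone_setOf_le f b ⟨0, h0⟩, recessionCone_eq_self h0 hS]

end Polyhedra

section Snoc

variable {R : Type*} [Semiring R] {n : ℕ}

variable (R n) in
def snocZero : (Fin n → R) →ₗ[R] (Fin (n + 1) → R) where
  toFun x := Fin.snoc x 0
  map_add' x y := by ext i; refine Fin.lastCases ?_ (fun i => ?_) i <;> simp
  map_smul' c x := by ext i; refine Fin.lastCases ?_ (fun i => ?_) i <;> simp

theorem snoc_eq_snocZero_add (x : Fin n → R) (r : R) :
    (Fin.snoc x r : Fin (n + 1) → R) = snocZero R n x + Pi.single (Fin.last n) r := by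
  ext i; refine Fin.lastCases ?_ (fun i => ?_) i <;> simp [snocZero]

end Snoc

theorem Fin.image_init_inter_eq_preimage_snoc {n : ℕ} {α : Type*} (S : Set (Fin (n + 1) → α))
    (r : α) : Fin.init '' (S ∩ {x | x (Fin.last n) = r}) = (fun x => Fin.snoc x r) ⁻¹' S := by
  ext x
  constructor
  · rintro ⟨y, ⟨hy, rfl⟩, rfl⟩
    simpa [Fin.snoc_init_self] using hy
  · intro hx
    exact ⟨Fin.snoc x r, ⟨hx, Fin.snoc_last ..⟩, Fin.init_snoc ..⟩

/-- for a polyhedral cone `σ ⊆ ℚ^{n+1}`, `s(σ ∩ φ⁻¹(1))` is a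
polyhedron in `ℚⁿ` whose recession cone is `s(σ ∩ φ⁻¹(0))`, provided
`σ ∩ φ⁻¹(1) ≠ ∅`; here `s` forgets the last coordinate and `φ` is the last
coordinate. -/
theorem downgrade_slice_polyhedron
    (n m : ℕ) (w : Fin m → (Fin (n + 1) → ℚ)) (σ : Set (Fin (n + 1) → ℚ))
    (hσ : σ = {x | ∃ c : Fin m → ℚ, (∀ i, 0 ≤ c i) ∧ x = ∑ i, c i • w i})
    (φ : (Fin (n + 1) → ℚ) → ℚ) (hφ : φ = fun x => x (Fin.last n))
    (s : (Fin (n + 1) → ℚ) → (Fin n → ℚ)) (hs : s = fun x i => x i.castSucc)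
    (Δ : Set (Fin n → ℚ)) (hΔ : Δ = s '' (σ ∩ {x | φ x = 1}))
    (hne : (σ ∩ {x | φ x = 1}).Nonempty) :
    (∃ (k : ℕ) (A : Matrix (Fin k) (Fin n) ℚ) (b : Fin k → ℚ),
      Δ = {x | ∀ j, b j ≤ A.mulVec x j}) ∧
    {v | ∀ x ∈ Δ, ∀ t : ℚ, 0 ≤ t → x + t • v ∈ Δ}
      = s '' (σ ∩ {x | φ x = 0}) := by
  obtain ⟨κ, _, f, hf⟩ := (isPolyhedral_nonnegSpan (𝕜 := ℚ) w).exists_eq_setOf_nonneg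
    (zero_mem_nonnegSpan w) fun _ hx _ hy _ ht => add_smul_mem_nonnegSpan hx hy ht
  have hσf : σ = {x | ∀ j, 0 ≤ f j x} := hσ.trans hf
  have hslice (r : ℚ) : s '' (σ ∩ {x | φ x = r}) =
      {x | ∀ j, 0 - f j (Pi.single (Fin.last n) r) ≤ (f j ∘ₗ snocZero ℚ n) x} := by
    subst hs hφ
    refine (Fin.image_init_inter_eq_preimage_snoc σ r).trans ?_
    simp_rw [← preimage_add_const_setOf_le, ← hσf, ← snoc_eq_snocZero_add]
  have hΔ' := hΔ.trans (hslice 1)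
  refine ⟨(hΔ' ▸ isPolyhedral_setOf_le _ _).exists_matrix, ?_⟩
  change recessionCone ℚ Δ = _
  rw [hslice 0, hΔ', recessionCone_setOf_le _ _ (hΔ' ▸ hΔ ▸ hne.image s)]
  simp
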